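/- arXiv:1007.3478 — 2 statements merged into one kernel-verified Lean document; each statement's English description precedes it below -/
import Mathlib

section
/- Let A be an m×m positive definite Hermitian matrix. Then the function I ↦ log det A[I] defined on subsets of {1,...,m} is submodular: log det A[I] + log det A[J] ≥ log det A[I∪J] + log det A[I∩J] for all I, J ⊆ {1,...,m}, with log det A[∅] := 0. -/
open Matrix
open scoped ComplexOrder

/-- The principal minor of `A` on the index set `I`; for `I = ∅` it is `1`. -/
noncomputable def pminor {m : ℕ} (A : Matrix (Fin m) (Fin m) ℂ) (I : Finset (Fin m)) : ℂ :=
  (A.submatrix (fun i : I => (i : Fin m)) (fun i : I => (i : Fin m))).det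

/-!
A set function is submodular as soon as it satisfies the local inequality
`f (S ∪ {k, l}) + f S ≤ f (S ∪ {k}) + f (S ∪ {l})`: first the marginal gain of adding `k` decreases
along `S ⊆ T`, then one adds the elements of `I \ J` one at a time.
For `f = log det A[·]` the local inequality is multiplicative, and it reduces to a `2 × 2` fact:
if `s` is the Schur complement of `A[S]` in `A[S ∪ {k, l}]`, the four minors are
`det A[S]` times `det s`, `1`, `s₀₀` and `s₁₁`, and `s₀₀ s₁₁ - det s = |s₀₁|² ≥ 0`.
-/

theorem add_le_add_of_add_le_add_of_add_le_add {M : Type*} [AddCommMonoid M] [PartialOrder M]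
    [IsOrderedCancelAddMonoid M] {a b c d e g : M} (h₁ : a + b ≤ c + d) (h₂ : c + e ≤ b + g) :
    a + e ≤ d + g :=
  le_of_add_le_add_right (a := b + c) <|
    calc a + e + (b + c) = (a + b) + (c + e) := by abel
      _ ≤ (c + d) + (b + g) := add_le_add h₁ h₂
      _ = d + g + (b + c) := by abel

namespace Finset

variable {ι M : Type*} [DecidableEq ι] [AddCommMonoid M] [PartialOrder M]
  [IsOrderedCancelAddMonoid M] {f : Finset ι → M}

theorem insert_add_le_add_insert_of_subset
    (hf : ∀ S k l, k ∉ S → l ∉ S → k ≠ l →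
      f (insert k (insert l S)) + f S ≤ f (insert k S) + f (insert l S))
    {S T : Finset ι} (hST : S ⊆ T) {k : ι} (hk : k ∉ T) :
    f (insert k T) + f S ≤ f T + f (insert k S) := by
  obtain ⟨D, hD, rfl⟩ : ∃ D, Disjoint D S ∧ T = D ∪ S :=
    ⟨T \ S, sdiff_disjoint, (sdiff_union_of_subset hST).symm⟩
  clear hST
  induction D using Finset.induction_on with
  | empty => rw [empty_union, add_comm]
  | insert l D hlD ih =>
    rw [insert_union] at hk ⊢
    have hlS : l ∉ S := disjoint_left.1 hD (mem_insert_self l D)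
    have hkl : k ≠ l := fun h => hk (h ▸ mem_insert_self _ _)
    have hkDS : k ∉ D ∪ S := fun h => hk (mem_insert_of_mem h)
    have hlDS : l ∉ D ∪ S := by simp [hlD, hlS]
    exact add_le_add_of_add_le_add_of_add_le_add (hf _ k l hkDS hlDS hkl)
      (ih (disjoint_of_subset_left (subset_insert l D) hD) hkDS)

theorem union_add_inter_le_of_insert_insert
    (hf : ∀ S k l, k ∉ S → l ∉ S → k ≠ l →
      f (insert k (insert l S)) + f S ≤ f (insert k S) + f (insert l S))
    (I J : Finset ι) : f (I ∪ J) + f (I ∩ J) ≤ f I + f J := by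
  suffices h : ∀ D C, Disjoint D J → C ⊆ J → f (D ∪ J) + f C ≤ f (D ∪ C) + f J by
    simpa only [sdiff_union_self_eq_union, sdiff_union_inter] using
      h (I \ J) (I ∩ J) sdiff_disjoint inter_subset_right
  intro D C hD hC
  induction D using Finset.induction_on with
  | empty => rw [empty_union, empty_union, add_comm]
  | insert k D hkD ih =>
    rw [insert_union, insert_union]
    have hkDJ : k ∉ D ∪ J := by simp [hkD, disjoint_left.1 hD (mem_insert_self k D)]
    exact add_le_add_of_add_le_add_of_add_le_add
      (insert_add_le_add_insert_of_subset hf (union_subset_union_right hC) hkDJ)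
      (ih (disjoint_of_subset_left (subset_insert k D) hD))

end Finset

namespace Matrix

variable {R 𝕜 α β γ : Type*} [Fintype α] [DecidableEq α]

theorem det_submatrix_sumMap_id [CommRing R] [Fintype γ] [DecidableEq γ]
    (M : Matrix (α ⊕ β) (α ⊕ β) R) [Invertible M.toBlocks₁₁] (e : γ → β) :
    (M.submatrix (Sum.map id e) (Sum.map id e)).det = M.toBlocks₁₁.det *
      ((M.toBlocks₂₂ - M.toBlocks₂₁ * ⅟M.toBlocks₁₁ * M.toBlocks₁₂).submatrix e e).det := by
  have hblocks : M.submatrix (Sum.map id e) (Sum.map id e) = fromBlocks M.toBlocks₁₁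
      (M.toBlocks₁₂.submatrix id e) (M.toBlocks₂₁.submatrix e id) (M.toBlocks₂₂.submatrix e e) := by
    ext (i | i) (j | j) <;> rfl
  rw [hblocks, det_fromBlocks₁₁]
  congr 2

theorem IsHermitian.det_mul_det_toBlocks₁₁_le [RCLike 𝕜] {M : Matrix (α ⊕ Fin 2) (α ⊕ Fin 2) 𝕜}
    (hM : M.IsHermitian) [Invertible M.toBlocks₁₁] :
    M.det * M.toBlocks₁₁.det ≤
      (M.submatrix (Sum.map id fun _ : Unit => 0) (Sum.map id fun _ : Unit => 0)).det *
        (M.submatrix (Sum.map id fun _ : Unit => 1) (Sum.map id fun _ : Unit => 1)).det := by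
  have hdet : M.det = M.toBlocks₁₁.det *
      (M.toBlocks₂₂ - M.toBlocks₂₁ * ⅟M.toBlocks₁₁ * M.toBlocks₁₂).det := by
    simpa only [Sum.map_id_id, submatrix_id_id] using det_submatrix_sumMap_id M id
  rw [hdet, det_submatrix_sumMap_id, det_submatrix_sumMap_id]
  rw [← fromBlocks_toBlocks M, isHermitian_fromBlocks_iff] at hM
  obtain ⟨hA, hBC, -, hD⟩ := hM
  set a := M.toBlocks₁₁.det
  set s := M.toBlocks₂₂ - M.toBlocks₂₁ * ⅟M.toBlocks₁₁ * M.toBlocks₁₂ with hs_def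
  have hs : s.IsHermitian := by
    rw [hs_def, ← hBC, invOf_eq_nonsing_inv]
    exact hD.sub (isHermitian_conjTranspose_mul_mul _ hA.inv)
  have ha : star a = a := by rw [← det_conjTranspose, hA.eq]
  rw [det_unique (s.submatrix _ _), det_unique (s.submatrix _ _), det_fin_two, ← hs.apply 1 0,
    ← sub_nonneg]
  convert star_mul_self_nonneg (a * s 0 1) using 1
  simp only [submatrix_apply, star_mul, ha]
  ring

end Matrix

section Pminor

variable {m : ℕ} {A : Matrix (Fin m) (Fin m) ℂ}

theorem pminor_eq_det_submatrix {β : Type*} [Fintype β] [DecidableEq β] {I : Finset (Fin m)}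
    {f : β → Fin m} (hf : Function.Injective f) (hI : Set.range f = I) :
    pminor A I = (A.submatrix f f).det := by
  rw [pminor, ← det_submatrix_equiv_self ((Equiv.ofInjective f hf).trans (Equiv.setCongr hI))]
  rfl

theorem pminor_pos (hA : A.PosDef) (I : Finset (Fin m)) : 0 < pminor A I :=
  (hA.submatrix Subtype.val_injective).det_pos

theorem pminor_insert_insert_mul_le (hA : A.PosDef) {S : Finset (Fin m)} {k l : Fin m}
    (hk : k ∉ S) (hl : l ∉ S) (hkl : k ≠ l) :
    pminor A (insert k (insert l S)) * pminor A S ≤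
      pminor A (insert k S) * pminor A (insert l S) := by
  have hinj : ∀ {β : Type} {v : β → Fin m}, Function.Injective v → (∀ b, v b ∉ S) →
      Function.Injective (Sum.elim ((↑) : S → Fin m) v) :=
    fun hv hvS => Subtype.val_injective.sumElim hv fun a b h => hvS b (h ▸ a.2)
  have hkl_inj : Function.Injective ![k, l] := by
    intro a b h
    fin_cases a <;> fin_cases b <;> simp_all [eq_comm]
  have hpair : Function.Injective (Sum.elim ((↑) : S → Fin m) ![k, l]) :=
    hinj hkl_inj (Fin.forall_fin_two.2 ⟨hk, hl⟩)
  have hsingle : ∀ j ∉ S, pminor A (insert j S) =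
      (A.submatrix (Sum.elim ((↑) : S → Fin m) fun _ : Unit => j)
        (Sum.elim ((↑) : S → Fin m) fun _ : Unit => j)).det :=
    fun j hj => pminor_eq_det_submatrix (hinj (Function.injective_of_subsingleton _) fun _ => hj)
      (by simp [Set.Sum.elim_range])
  let : Invertible (A.submatrix (Sum.elim ((↑) : S → Fin m) ![k, l])
      (Sum.elim ((↑) : S → Fin m) ![k, l])).toBlocks₁₁ :=
    (hA.submatrix Subtype.val_injective).isUnit.invertible
  have key := (hA.submatrix hpair).isHermitian.det_mul_det_toBlocks₁₁_le
  simp only [submatrix_submatrix, Sum.elim_comp_map, Function.comp_id] at key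
  rw [pminor_eq_det_submatrix hpair (by simp [Set.Sum.elim_range, Set.insert_comm]),
    hsingle k hk, hsingle l hl]
  exact key

theorem re_pminor_insert_insert_mul_le (hA : A.PosDef) {S : Finset (Fin m)} {k l : Fin m}
    (hk : k ∉ S) (hl : l ∉ S) (hkl : k ≠ l) :
    (pminor A (insert k (insert l S))).re * (pminor A S).re ≤
      (pminor A (insert k S)).re * (pminor A (insert l S)).re := by
  have him : ∀ I, (pminor A I).im = 0 := fun I => (Complex.pos_iff.1 (pminor_pos hA I)).2.symm
  simpa only [Complex.mul_re, him, mul_zero, sub_zero] using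
    Complex.re_le_re (pminor_insert_insert_mul_le hA hk hl hkl)

end Pminor

/-- For a positive definite Hermitian matrix `A`, the set function
`I ↦ log det A[I]` is submodular (with `log det A[∅] = 0`). -/
theorem logdet_principal_submodular {m : ℕ} (A : Matrix (Fin m) (Fin m) ℂ)
    (hA : A.PosDef) (I J : Finset (Fin m)) :
    Real.log (pminor A (I ∪ J)).re + Real.log (pminor A (I ∩ J)).re ≤
      Real.log (pminor A I).re + Real.log (pminor A J).re := by
  have hre : ∀ K, 0 < (pminor A K).re := fun K => (Complex.pos_iff.1 (pminor_pos hA K)).1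
  refine Finset.union_add_inter_le_of_insert_insert (f := fun K => Real.log (pminor A K).re)
    (fun S k l hk hl hkl => ?_) I J
  rw [← Real.log_mul (hre _).ne' (hre _).ne', ← Real.log_mul (hre _).ne' (hre _).ne']
  exact Real.log_le_log (mul_pos (hre _) (hre _)) (re_pminor_insert_insert_mul_le hA hk hl hkl)
end

section
/- Let A = sI − B where B is an m×m matrix with nonnegative entries and s > ρ(B). Then for every real p with p < 0 or 1 ≤ p ≤ 2, and all subsets I, J of {1,...,m}: tr(A[I]^p) + tr(A[J]^p) ≤ tr(A[I∪J]^p) + tr(A[I∩J]^p), where A^p is defined by the binomial series s^p Σᵢ C(p,i)(−s)^{−i}Bⁱ. -/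
/-!
Expanding the binomial series, `tr (A[K]^p) = ∑ᵢ cᵢ tr (B[K]^i)` with
`cᵢ = s^(p-i) (-1)^i C(p, i)`. For `i ≤ 1` the set function `K ↦ tr (B[K]^i)` is modular
(`|K|` or `∑_{k ∈ K} b_kk`). For `i ≥ 2` and `p < 0` or `1 ≤ p ≤ 2` we have `cᵢ ≥ 0`,
and `tr (B[K]^i)` is the total weight of the closed walks of length `i` inside `K`; the walks
inside `I ∩ J` are those inside both `I` and `J`, and a walk inside `I` or `J` lies inside
`I ∪ J`, so this function is supermodular for `B ≥ 0`. The series converge because, by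
Gelfand's formula, the entries of `B^i`, and hence those of `B[K]^i ≤ B^i`, are eventually at
most `r^i` for some `r < s`.
-/

open Matrix

/-- The principal submatrix of `B` with rows and columns in `I`. -/
def rsub {m : ℕ} (B : Matrix (Fin m) (Fin m) ℝ) (I : Finset (Fin m)) :
    Matrix I I ℝ :=
  B.submatrix (fun i : I => (i : Fin m)) (fun i : I => (i : Fin m))

/-- Generalized binomial coefficient `C(p, i) = p (p-1) ⋯ (p-i+1) / i!`. -/
noncomputable def genBinom (p : ℝ) (i : ℕ) : ℝ :=
  (∏ k ∈ Finset.range i, (p - k)) / (Nat.factorial i)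

/-- `(s·Id - B)^p`, defined by the binomial series
`s^p Σ_{i≥0} C(p,i) (-s)^{-i} Bⁱ`, absolutely convergent when `s > ρ(B)`. -/
noncomputable def mPow {n : Type*} [Fintype n] [DecidableEq n]
    (s p : ℝ) (B : Matrix n n ℝ) : Matrix n n ℝ :=
  ∑' i : ℕ, (s ^ p * genBinom p i * ((-s) ^ i)⁻¹) • B ^ i

open Filter Finset

noncomputable def mPowCoeff (s p : ℝ) (i : ℕ) : ℝ :=
  s ^ p * genBinom p i * ((-s) ^ i)⁻¹

lemma genBinom_succ (p : ℝ) (i : ℕ) :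
    genBinom p (i + 1) = genBinom p i * ((p - i) / (i + 1)) := by
  unfold genBinom
  rw [prod_range_succ, Nat.factorial_succ]
  push_cast
  field_simp

lemma summable_abs_genBinom_mul_pow (p : ℝ) {x : ℝ} (hx0 : 0 ≤ x) (hx1 : x < 1) :
    Summable fun i : ℕ => |genBinom p i| * x ^ i := by
  obtain ⟨r, hxr, hr1⟩ := exists_between hx1
  refine summable_of_ratio_norm_eventually_le hr1 ?_
  filter_upwards [eventually_ge_atTop ⌈|p| / (r - x)⌉₊] with i hi
  have hpi : |p| ≤ i * (r - x) :=
    (div_le_iff₀ (sub_pos.2 hxr)).1 ((Nat.le_ceil _).trans (by exact_mod_cast hi))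
  have hratio : |p - i| * x ≤ r * (i + 1) := by
    have : |p - i| ≤ |p| + i := (abs_sub _ _).trans (by simp)
    nlinarith [abs_nonneg p]
  simp only [Real.norm_eq_abs, abs_mul, abs_abs, abs_pow, abs_of_nonneg hx0, genBinom_succ,
    abs_div, abs_of_pos (by positivity : (0 : ℝ) < i + 1)]
  calc |genBinom p i| * (|p - i| / (i + 1)) * x ^ (i + 1)
      = |genBinom p i| * x ^ i * (|p - i| * x / (i + 1)) := by ring
    _ ≤ |genBinom p i| * x ^ i * r := by
      gcongr
      exact (div_le_iff₀ (by positivity)).2 hratio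
    _ = r * (|genBinom p i| * x ^ i) := mul_comm _ _

lemma neg_one_pow_mul_genBinom (p : ℝ) (i : ℕ) :
    (-1) ^ i * genBinom p i = (∏ k ∈ range i, ((k : ℝ) - p)) / i.factorial := by
  have : ∏ k ∈ range i, ((k : ℝ) - p) = ∏ k ∈ range i, -(p - k) := by simp
  rw [genBinom, mul_div_assoc', this, prod_neg, card_range]

lemma prod_range_natCast_sub_nonneg {p : ℝ} (hp : p < 0 ∨ (1 ≤ p ∧ p ≤ 2)) {i : ℕ}
    (hi : 2 ≤ i) : 0 ≤ ∏ k ∈ range i, ((k : ℝ) - p) := by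
  rcases hp with hp | ⟨hp1, hp2⟩
  · exact prod_nonneg fun k _ => by linarith [(Nat.cast_nonneg k : (0 : ℝ) ≤ k)]
  · rw [← prod_range_mul_prod_Ico _ hi]
    refine mul_nonneg ?_ (prod_nonneg fun k hk => ?_)
    · norm_num [prod_range_succ]
      nlinarith
    · have : (2 : ℝ) ≤ k := by exact_mod_cast (mem_Ico.1 hk).1
      linarith

lemma mPowCoeff_eq_div_mul {s : ℝ} (hs : 0 < s) (p : ℝ) (i : ℕ) :
    mPowCoeff s p i = s ^ p / s ^ i * ((-1) ^ i * genBinom p i) := by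
  rw [mPowCoeff, neg_pow, mul_inv, ← inv_pow, inv_neg_one]
  field_simp

lemma mPowCoeff_nonneg {s p : ℝ} (hs : 0 < s) (hp : p < 0 ∨ (1 ≤ p ∧ p ≤ 2)) {i : ℕ}
    (hi : 2 ≤ i) : 0 ≤ mPowCoeff s p i := by
  rw [mPowCoeff_eq_div_mul hs p, neg_one_pow_mul_genBinom]
  have := prod_range_natCast_sub_nonneg hp hi
  positivity

lemma summable_abs_mPowCoeff_mul_pow (p : ℝ) {s r : ℝ} (hs : 0 < s) (hr : 0 ≤ r)
    (hrs : r < s) : Summable fun i => |mPowCoeff s p i| * r ^ i := by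
  refine ((summable_abs_genBinom_mul_pow p (by positivity) ((div_lt_one hs).2 hrs)).mul_left
    (s ^ p)).congr fun i => ?_
  rw [mPowCoeff_eq_div_mul hs p, abs_mul, abs_mul, abs_neg_one_pow, one_mul,
    abs_of_pos (by positivity : 0 < s ^ p / s ^ i), div_pow]
  field_simp

section GrowthOfPowers

lemma eventually_norm_pow_le_pow {A : Type*} [NormedRing A] [NormedAlgebra ℂ A]
    [CompleteSpace A] {a : A} {r : ℝ} (h : spectralRadius ℂ a < ENNReal.ofReal r) :
    ∀ᶠ n in atTop, ‖a ^ n‖ ≤ r ^ n := by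
  filter_upwards [(spectrum.pow_norm_pow_one_div_tendsto_nhds_spectralRadius a).eventually_lt_const
    h, eventually_ne_atTop 0] with n hn hn0
  have hlt := (ENNReal.ofReal_lt_ofReal_iff_of_nonneg (by positivity)).1 hn
  calc ‖a ^ n‖ = (‖a ^ n‖ ^ (1 / n : ℝ)) ^ n := by
        rw [one_div, Real.rpow_inv_natCast_pow (norm_nonneg _) hn0]
    _ ≤ r ^ n := pow_le_pow_left₀ (by positivity) hlt.le n

-- Gelfand's formula needs some Banach algebra norm on matrices; the `L∞` operator norm
-- is one that dominates every entry.
attribute [local instance] Matrix.linftyOpSeminormedAddCommGroup Matrix.linftyOpNormedAddCommGroup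
  Matrix.linftyOpNormedRing Matrix.linftyOpNormedAlgebra

lemma Matrix.norm_entry_le_linfty_opNorm {m n α : Type*} [Fintype m] [Fintype n]
    [SeminormedAddCommGroup α] (A : Matrix m n α) (i : m) (j : n) : ‖A i j‖ ≤ ‖A‖ := by
  rw [← coe_nnnorm, ← coe_nnnorm, NNReal.coe_le_coe, linfty_opNNNorm_def]
  exact (single_le_sum (f := fun j => ‖A i j‖₊) (fun _ _ => zero_le) (mem_univ j)).trans
    (le_sup (f := fun i => ∑ j, ‖A i j‖₊) (mem_univ i))

lemma eventually_abs_pow_apply_le {n : Type*} [Fintype n] [DecidableEq n] (B : Matrix n n ℝ)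
    {r : ℝ} (h : spectralRadius ℂ (B.map Complex.ofReal) < ENNReal.ofReal r) :
    ∀ᶠ i in atTop, ∀ a b, |(B ^ i) a b| ≤ r ^ i := by
  filter_upwards [eventually_norm_pow_le_pow h] with i hi a b
  have hmap : B.map Complex.ofReal ^ i = (B ^ i).map Complex.ofReal :=
    (map_pow Complex.ofRealHom.mapMatrix B i).symm
  rw [hmap] at hi
  simpa using (Matrix.norm_entry_le_linfty_opNorm _ a b).trans hi

end GrowthOfPowers

section BinomialSeries

variable {n : Type*} [Fintype n] [DecidableEq n] {s p r : ℝ} {M : Matrix n n ℝ}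

lemma hasSum_mPow (hs : 0 < s) (hr : 0 ≤ r) (hrs : r < s)
    (hM : ∀ᶠ i in atTop, ∀ a b, |(M ^ i) a b| ≤ r ^ i) :
    HasSum (fun i => mPowCoeff s p i • M ^ i) (mPow s p M) := by
  refine Summable.hasSum (Pi.summable.2 fun a => Pi.summable.2 fun b => ?_)
  refine (summable_abs_mPowCoeff_mul_pow p hs hr hrs).of_norm_bounded_eventually ?_
  rw [Nat.cofinite_eq_atTop]
  filter_upwards [hM] with i hi
  simpa [abs_mul] using mul_le_mul_of_nonneg_left (hi a b) (abs_nonneg (mPowCoeff s p i))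

lemma hasSum_trace_mPow (hs : 0 < s) (hr : 0 ≤ r) (hrs : r < s)
    (hM : ∀ᶠ i in atTop, ∀ a b, |(M ^ i) a b| ≤ r ^ i) :
    HasSum (fun i => mPowCoeff s p i * trace (M ^ i)) (trace (mPow s p M)) := by
  simpa [Function.comp_def] using
    (hasSum_mPow (p := p) hs hr hrs hM).map (traceAddMonoidHom n ℝ) continuous_id.matrix_trace

end BinomialSeries

section Walks

variable {n R : Type*} [CommSemiring R] (M : Matrix n n R)

def pathProd {k : ℕ} (v : Fin (k + 1) → n) : R :=
  ∏ j : Fin k, M (v j.castSucc) (v j.succ)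

def cycProd {k : ℕ} (u : Fin (k + 1) → n) : R :=
  pathProd M (Fin.snoc u (u 0))

lemma pathProd_cons {k : ℕ} (a : n) (v : Fin (k + 1) → n) :
    pathProd M (Fin.cons a v) = M a (v 0) * pathProd M v := by
  simp [pathProd, Fin.prod_univ_succ]

lemma cycProd_nonneg [PartialOrder R] [IsOrderedRing R] (hM : ∀ a b, 0 ≤ M a b) {k : ℕ}
    (u : Fin (k + 1) → n) : 0 ≤ cycProd M u := by
  unfold cycProd pathProd
  exact prod_nonneg fun _ _ => hM _ _

variable [Fintype n] [DecidableEq n]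

lemma pow_succ_apply_eq_sum_pathProd (k : ℕ) (a b : n) :
    (M ^ (k + 1)) a b = ∑ w : Fin k → n, pathProd M (Fin.cons a (Fin.snoc w b)) := by
  induction k generalizing a with
  | zero => simp [pathProd, Fin.snoc]
  | succ k ih =>
    rw [pow_succ', mul_apply]
    simp_rw [ih, mul_sum, ← (Fin.consEquiv fun _ => n).sum_comp, Fintype.sum_prod_type]
    refine sum_congr rfl fun c _ => sum_congr rfl fun w _ => ?_
    simp [Fin.consEquiv, ← Fin.cons_snoc_eq_snoc_cons, pathProd_cons]

lemma trace_pow_succ_eq_sum_cycProd (k : ℕ) :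
    trace (M ^ (k + 1)) = ∑ u : Fin (k + 1) → n, cycProd M u := by
  simp_rw [trace, Matrix.diag, pow_succ_apply_eq_sum_pathProd,
    ← (Fin.consEquiv fun _ => n).sum_comp, Fintype.sum_prod_type]
  simp [Fin.consEquiv, cycProd, Fin.cons_snoc_eq_snoc_cons]

end Walks

section PrincipalSubmatrix

variable {m : ℕ} {B : Matrix (Fin m) (Fin m) ℝ}

lemma rsub_pow_apply_le (hB : ∀ a b, 0 ≤ B a b) (K : Finset (Fin m)) (i : ℕ) (a b : K) :
    (rsub B K ^ i) a b ≤ (B ^ i) a b := by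
  induction i generalizing b with
  | zero => by_cases h : a = b <;> simp [one_apply, h]
  | succ i ih =>
    rw [pow_succ, pow_succ, mul_apply, mul_apply]
    calc ∑ c : K, (rsub B K ^ i) a c * rsub B K c b
        ≤ ∑ c : K, (B ^ i) a c * B c b :=
          sum_le_sum fun c _ => mul_le_mul_of_nonneg_right (ih c) (hB _ _)
      _ = ∑ c ∈ K, (B ^ i) a c * B c b := sum_coe_sort K fun c => (B ^ i) a c * B c b
      _ ≤ ∑ c, (B ^ i) a c * B c b := sum_le_sum_of_subset_of_nonneg (subset_univ K)
          fun c _ _ => mul_nonneg (pow_apply_nonneg hB i _ _) (hB _ _)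

lemma eventually_abs_rsub_pow_apply_le (hB : ∀ a b, 0 ≤ B a b) (K : Finset (Fin m)) {r : ℝ}
    (h : ∀ᶠ i in atTop, ∀ a b, |(B ^ i) a b| ≤ r ^ i) :
    ∀ᶠ i in atTop, ∀ a b : K, |(rsub B K ^ i) a b| ≤ r ^ i := by
  filter_upwards [h] with i hi a b
  rw [abs_of_nonneg (pow_apply_nonneg (A := rsub B K) (fun _ _ => hB _ _) i a b)]
  exact (rsub_pow_apply_le hB K i a b).trans ((le_abs_self _).trans (hi a b))

lemma trace_rsub_pow_of_le_one (K : Finset (Fin m)) {i : ℕ} (hi : i ≤ 1) :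
    trace (rsub B K ^ i) = ∑ x ∈ K, (B ^ i) x x := by
  interval_cases i
  · simp [trace]
  · simpa [trace, rsub] using sum_coe_sort K fun x => B x x

lemma trace_rsub_pow_succ (K : Finset (Fin m)) (k : ℕ) :
    trace (rsub B K ^ (k + 1)) =
      ∑ u : Fin (k + 1) → Fin m with ∀ j, u j ∈ K, cycProd B u := by
  rw [trace_pow_succ_eq_sum_cycProd]
  conv_rhs => rw [sum_subtype (p := fun u => ∀ j, u j ∈ K) _ (by simp)]
  refine Fintype.sum_equiv
    (Equiv.subtypePiEquivPi (β := fun _ => Fin m) (p := fun _ x => x ∈ K)).symm _ _ fun u => ?_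
  have hsnoc : ∀ x, ((Fin.snoc u (u 0) : Fin (k + 2) → K) x : Fin m) =
      (Fin.snoc (fun j => (u j : Fin m)) (u 0 : Fin m) : Fin (k + 2) → Fin m) x :=
    congrFun (Fin.comp_snoc (Subtype.val : K → Fin m) u (u 0))
  simp [cycProd, pathProd, rsub, Equiv.subtypePiEquivPi, hsnoc]

lemma trace_rsub_pow_succ_supermodular (hB : ∀ a b, 0 ≤ B a b) (k : ℕ)
    (I J : Finset (Fin m)) :
    trace (rsub B I ^ (k + 1)) + trace (rsub B J ^ (k + 1)) ≤
      trace (rsub B (I ∪ J) ^ (k + 1)) + trace (rsub B (I ∩ J) ^ (k + 1)) := by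
  set S : Finset (Fin m) → Finset (Fin (k + 1) → Fin m) := fun K => {u | ∀ j, u j ∈ K}
  have hinter : S (I ∩ J) = S I ∩ S J := by
    ext u
    simp [S, forall_and]
  have hunion : S I ∪ S J ⊆ S (I ∪ J) := by
    intro u
    simp only [S, mem_union, mem_filter_univ]
    rintro (h | h) j <;> simp [h j]
  calc trace (rsub B I ^ (k + 1)) + trace (rsub B J ^ (k + 1))
      = ∑ u ∈ S I ∪ S J, cycProd B u + ∑ u ∈ S I ∩ S J, cycProd B u := by
        rw [sum_union_inter, trace_rsub_pow_succ, trace_rsub_pow_succ]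
    _ ≤ trace (rsub B (I ∪ J) ^ (k + 1)) + trace (rsub B (I ∩ J) ^ (k + 1)) := by
        rw [trace_rsub_pow_succ, trace_rsub_pow_succ, ← hinter]
        exact add_le_add_left
          (sum_le_sum_of_subset_of_nonneg hunion fun u _ _ => cycProd_nonneg B hB u) _

lemma mPowCoeff_mul_trace_rsub_pow_supermodular (hB : ∀ a b, 0 ≤ B a b) {s p : ℝ}
    (hs : 0 < s) (hp : p < 0 ∨ (1 ≤ p ∧ p ≤ 2)) (i : ℕ) (I J : Finset (Fin m)) :
    mPowCoeff s p i * trace (rsub B I ^ i) + mPowCoeff s p i * trace (rsub B J ^ i) ≤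
      mPowCoeff s p i * trace (rsub B (I ∪ J) ^ i) +
        mPowCoeff s p i * trace (rsub B (I ∩ J) ^ i) := by
  simp only [← mul_add]
  rcases le_or_gt i 1 with hi | hi
  · simp only [trace_rsub_pow_of_le_one _ hi, sum_union_inter, le_refl]
  · obtain ⟨k, rfl⟩ : ∃ k, i = k + 1 := ⟨i - 1, by omega⟩
    exact mul_le_mul_of_nonneg_left (trace_rsub_pow_succ_supermodular hB k I J)
      (mPowCoeff_nonneg hs hp hi)

end PrincipalSubmatrix

/-- For a nonsingular M-matrix `A = s·Id − B` (with `B ≥ 0` entrywise,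
`s > ρ(B)`) and `p < 0` or `1 ≤ p ≤ 2`, the set function `I ↦ tr (A[I]^p)` is
supermodular, where `A[I]^p = (s·Id − B[I])^p` is given by the binomial series. -/
theorem trace_mmatrix_rpow_supermodular {m : ℕ} (B : Matrix (Fin m) (Fin m) ℝ)
    (hB : ∀ i j, 0 ≤ B i j) (s : ℝ)
    (hs : spectralRadius ℂ (B.map (Complex.ofReal)) < ENNReal.ofReal s)
    (p : ℝ) (hp : p < 0 ∨ (1 ≤ p ∧ p ≤ 2)) (I J : Finset (Fin m)) :
    Matrix.trace (mPow s p (rsub B I)) + Matrix.trace (mPow s p (rsub B J)) ≤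
      Matrix.trace (mPow s p (rsub B (I ∪ J))) + Matrix.trace (mPow s p (rsub B (I ∩ J))) := by
  have hs0 : 0 < s := ENNReal.ofReal_pos.1 (pos_of_gt hs)
  obtain ⟨t, hρt, hts⟩ := exists_between hs
  have ht : t ≠ ⊤ := hts.ne_top
  have hrs : t.toReal < s := (ENNReal.lt_ofReal_iff_toReal_lt ht).1 hts
  have hpow := eventually_abs_pow_apply_le B (r := t.toReal) (by rwa [ENNReal.ofReal_toReal ht])
  have hsum (K : Finset (Fin m)) :
      HasSum (fun i => mPowCoeff s p i * trace (rsub B K ^ i)) (trace (mPow s p (rsub B K))) :=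
    hasSum_trace_mPow hs0 ENNReal.toReal_nonneg hrs (eventually_abs_rsub_pow_apply_le hB K hpow)
  exact hasSum_le (fun i => mPowCoeff_mul_trace_rsub_pow_supermodular hB hs0 hp i I J)
    ((hsum I).add (hsum J)) ((hsum (I ∪ J)).add (hsum (I ∩ J)))
end
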